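/- arXiv:1109.4711 — 2 statements merged into one kernel-verified Lean document; each statement's English description precedes it below -/
import Mathlib

section
/- If $(z_j)$ is a sequence in the open unit disk $\mathbb{D}$ satisfying the Blaschke condition $\sum_{j=1}^{\infty}(1-|z_j|) < \infty$, then there exists a non-constant analytic function $f : \mathbb{D} \to \overline{\mathbb{D}}$ whose zero set is exactly $(z_j)$ (with multiplicities). -/
/-!
The required function is the Blaschke product `∏ⱼ b_{zⱼ}`, whose factors are normalised by
`b_a(0) = ‖a‖ ≥ 0`. For `‖u‖ ≤ r < 1` one has `‖1 - b_a(u)‖ ≤ (1 + r) / (1 - r) * (1 - ‖a‖)`, so the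
Blaschke condition makes the product converge uniformly on compact subsets of the disc: the limit
is holomorphic and bounded by `1`, like each factor. Since `‖zⱼ‖ → 1`, only finitely many `zⱼ` equal
a given `w` in the disc; splitting off a long enough finite product leaves a convergent tail that
does not vanish at `w`, so the order of the zero at `w` is that of the finite product,
`#{j | zⱼ = w}`. The product vanishes at `z₀` but not off the countable set `{zⱼ}`, so it is not
constant.
-/

open Metric Set Filter

open ComplexConjugate Topology

lemma analyticOrderAt_finset_prod {𝕜 ι : Type*} [NontriviallyNormedField 𝕜] {s : Finset ι}
    {f : ι → 𝕜 → 𝕜} {x : 𝕜} (hf : ∀ i ∈ s, AnalyticAt 𝕜 (f i) x) :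
    analyticOrderAt (∏ i ∈ s, f i) x = ∑ i ∈ s, analyticOrderAt (f i) x := by
  classical
  induction s using Finset.induction with
  | empty => simp [analyticOrderAt_eq_zero]
  | insert a s ha ih =>
    rw [Finset.prod_insert ha, Finset.sum_insert ha,
      analyticOrderAt_mul (hf a (Finset.mem_insert_self a s))
        (Finset.analyticAt_prod s fun i hi => hf i (Finset.mem_insert_of_mem hi)),
      ih fun i hi => hf i (Finset.mem_insert_of_mem hi)]

lemma eventually_ne_of_summable_one_sub_norm {z : ℕ → ℂ} (hB : Summable fun j => 1 - ‖z j‖)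
    {w : ℂ} (hw : ‖w‖ < 1) : ∀ᶠ j in atTop, z j ≠ w := by
  filter_upwards [hB.tendsto_atTop_zero.eventually (gt_mem_nhds (sub_pos.mpr hw))] with j hj
  rintro rfl
  exact lt_irrefl _ hj

lemma one_sub_conj_mul_ne_zero {a u : ℂ} (ha : ‖a‖ ≤ 1) (hu : ‖u‖ < 1) :
    1 - conj a * u ≠ 0 := by
  refine sub_ne_zero.mpr fun h => ?_
  have : ‖conj a * u‖ < 1 := by
    rw [norm_mul, Complex.norm_conj]
    exact lt_of_le_of_lt (mul_le_of_le_one_left (norm_nonneg u) ha) hu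
  simp [← h] at this

lemma norm_one_sub_conj_mul_sq_sub_norm_sub_sq (a u : ℂ) :
    ‖1 - conj a * u‖ ^ 2 - ‖a - u‖ ^ 2 = (1 - ‖a‖ ^ 2) * (1 - ‖u‖ ^ 2) := by
  simp only [← Complex.normSq_eq_norm_sq, Complex.normSq_apply, Complex.sub_re, Complex.sub_im,
    Complex.mul_re, Complex.mul_im, Complex.conj_re, Complex.conj_im, Complex.one_re,
    Complex.one_im]
  ring

/-- The unimodular constant normalising `blaschkeFactor a` so that `blaschkeFactor a 0 = ‖a‖`, which
the convergence of Blaschke products needs; at `a = 0` it is chosen so that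
`blaschkeFactor 0 u = u`. -/
noncomputable def blaschkeUnit (a : ℂ) : ℂ := if a = 0 then -1 else ‖a‖ / a

noncomputable def blaschkeFactor (a u : ℂ) : ℂ := blaschkeUnit a * (a - u) / (1 - conj a * u)

lemma norm_blaschkeUnit (a : ℂ) : ‖blaschkeUnit a‖ = 1 := by
  unfold blaschkeUnit
  split_ifs with h
  · simp
  · simp [h]

lemma blaschkeUnit_ne_zero (a : ℂ) : blaschkeUnit a ≠ 0 :=
  norm_ne_zero_iff.mp (by simp [norm_blaschkeUnit])

lemma blaschkeUnit_mul_self (a : ℂ) : blaschkeUnit a * a = ‖a‖ := by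
  unfold blaschkeUnit
  split_ifs with h
  · simp [h]
  · field_simp

lemma norm_mul_blaschkeUnit (a : ℂ) : ‖a‖ * blaschkeUnit a = conj a := by
  unfold blaschkeUnit
  split_ifs with h
  · simp [h]
  · rw [← mul_div_assoc, div_eq_iff h, ← sq, Complex.conj_mul']

lemma blaschkeFactor_self (a : ℂ) : blaschkeFactor a a = 0 := by
  simp [blaschkeFactor]

lemma blaschkeFactor_eq_sub_mul (a u : ℂ) :
    blaschkeFactor a u = (u - a) * (-blaschkeUnit a / (1 - conj a * u)) := by
  unfold blaschkeFactor; ring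

lemma blaschkeFactor_ne_zero {a u : ℂ} (ha : ‖a‖ ≤ 1) (hu : ‖u‖ < 1) (hua : u ≠ a) :
    blaschkeFactor a u ≠ 0 :=
  div_ne_zero (mul_ne_zero (blaschkeUnit_ne_zero a)
    (sub_ne_zero.mpr hua.symm)) (one_sub_conj_mul_ne_zero ha hu)

lemma analyticAt_blaschkeFactor {a u : ℂ} (ha : ‖a‖ ≤ 1) (hu : ‖u‖ < 1) :
    AnalyticAt ℂ (blaschkeFactor a) u := by
  have := one_sub_conj_mul_ne_zero ha hu
  unfold blaschkeFactor
  fun_prop (disch := assumption)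

lemma norm_blaschkeFactor_le_one {a u : ℂ} (ha : ‖a‖ ≤ 1) (hu : ‖u‖ < 1) :
    ‖blaschkeFactor a u‖ ≤ 1 := by
  have hden := norm_pos_iff.mpr (one_sub_conj_mul_ne_zero ha hu)
  have hsq : ‖a - u‖ ^ 2 ≤ ‖1 - conj a * u‖ ^ 2 := by
    have hid := norm_one_sub_conj_mul_sq_sub_norm_sub_sq a u
    have hpos : 0 ≤ (1 - ‖a‖ ^ 2) * (1 - ‖u‖ ^ 2) := by
      apply mul_nonneg <;> nlinarith [norm_nonneg a, norm_nonneg u]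
    linarith
  rw [blaschkeFactor, norm_div, norm_mul, norm_blaschkeUnit, one_mul, div_le_one hden]
  exact (pow_le_pow_iff_left₀ (norm_nonneg _) hden.le two_ne_zero).mp hsq

lemma one_sub_blaschkeFactor {a u : ℂ} (hden : 1 - conj a * u ≠ 0) :
    1 - blaschkeFactor a u = (1 - ‖a‖) * (1 + blaschkeUnit a * u) / (1 - conj a * u) := by
  rw [blaschkeFactor, eq_div_iff hden, sub_mul, div_mul_cancel₀ _ hden]
  linear_combination -blaschkeUnit_mul_self a + u * norm_mul_blaschkeUnit a

lemma norm_one_sub_blaschkeFactor_le {a u : ℂ} {r : ℝ} (ha : ‖a‖ ≤ 1) (hu : ‖u‖ ≤ r)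
    (hr : r < 1) : ‖1 - blaschkeFactor a u‖ ≤ (1 + r) / (1 - r) * (1 - ‖a‖) := by
  have hden : 1 - r ≤ ‖1 - conj a * u‖ := by
    calc 1 - r ≤ 1 - ‖conj a * u‖ := by
          rw [norm_mul, Complex.norm_conj]
          nlinarith [norm_nonneg a, norm_nonneg u]
      _ ≤ ‖1 - conj a * u‖ := by simpa using norm_sub_norm_le (1 : ℂ) (conj a * u)
  have hnum : ‖1 + blaschkeUnit a * u‖ ≤ 1 + r := by
    calc ‖1 + blaschkeUnit a * u‖ ≤ 1 + ‖u‖ := by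
          simpa [norm_blaschkeUnit] using norm_add_le (1 : ℂ) (blaschkeUnit a * u)
      _ ≤ 1 + r := by linarith
  have hna : ‖(1 : ℂ) - ‖a‖‖ = 1 - ‖a‖ := by
    rw [← Complex.ofReal_one, ← Complex.ofReal_sub, Complex.norm_real,
      Real.norm_of_nonneg (by linarith)]
  rw [one_sub_blaschkeFactor (one_sub_conj_mul_ne_zero ha (hu.trans_lt hr)), norm_div, norm_mul,
    hna]
  calc (1 - ‖a‖) * ‖1 + blaschkeUnit a * u‖ / ‖1 - conj a * u‖
      ≤ (1 - ‖a‖) * (1 + r) / (1 - r) := by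
        have : 0 ≤ 1 - ‖a‖ := by linarith
        have : 0 ≤ 1 + r := by linarith [norm_nonneg u]
        gcongr
    _ = (1 + r) / (1 - r) * (1 - ‖a‖) := by ring

lemma analyticOrderAt_blaschkeFactor {a w : ℂ} (ha : ‖a‖ ≤ 1) (hw : ‖w‖ < 1) :
    analyticOrderAt (blaschkeFactor a) w = if a = w then 1 else 0 := by
  split_ifs with h
  · subst h
    refine (analyticAt_blaschkeFactor ha hw).analyticOrderAt_eq_natCast (n := 1) |>.mpr
      ⟨fun u => -blaschkeUnit a / (1 - conj a * u), ?_, ?_, ?_⟩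
    · have := one_sub_conj_mul_ne_zero ha hw
      fun_prop (disch := assumption)
    · exact div_ne_zero (neg_ne_zero.mpr (blaschkeUnit_ne_zero a))
        (one_sub_conj_mul_ne_zero ha hw)
    · exact Eventually.of_forall fun u => by simp [blaschkeFactor_eq_sub_mul]
  · exact (analyticAt_blaschkeFactor ha hw).analyticOrderAt_eq_zero.mpr
      (blaschkeFactor_ne_zero ha hw (Ne.symm h))

noncomputable def blaschkeProduct (z : ℕ → ℂ) (u : ℂ) : ℂ := ∏' j, blaschkeFactor (z j) u

section BlaschkeProduct

variable {z : ℕ → ℂ}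

lemma hasProdLocallyUniformlyOn_blaschkeProduct (hz : ∀ j, z j ∈ ball (0 : ℂ) 1)
    (hB : Summable fun j => 1 - ‖z j‖) :
    HasProdLocallyUniformlyOn (fun j => blaschkeFactor (z j)) (blaschkeProduct z) (ball 0 1) := by
  refine hasProdLocallyUniformlyOn_of_forall_compact isOpen_ball fun K hK hKc => ?_
  obtain ⟨r, hr, hKr⟩ := exists_lt_subset_ball hKc.isClosed hK
  have hza : ∀ j, ‖z j‖ ≤ 1 := fun j => (mem_ball_zero_iff.mp (hz j)).le
  have hbound : ∀ᶠ j in atTop, ∀ u ∈ K,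
      ‖blaschkeFactor (z j) u - 1‖ ≤ (1 + r) / (1 - r) * (1 - ‖z j‖) :=
    Eventually.of_forall fun j u hu => by
      rw [norm_sub_rev]
      exact norm_one_sub_blaschkeFactor_le (hza j) (mem_ball_zero_iff.mp (hKr hu)).le hr
  have hcont : ∀ j, ContinuousOn (fun u => blaschkeFactor (z j) u - 1) K := fun j u hu =>
    ((analyticAt_blaschkeFactor (hza j) (mem_ball_zero_iff.mp (hK hu))).continuousAt.sub
      continuousAt_const).continuousWithinAt
  have h := Summable.hasProdUniformlyOn_nat_one_add hKc (hB.mul_left _) hbound hcont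
  simp only [add_sub_cancel] at h
  exact h

lemma hasProd_blaschkeProduct (hz : ∀ j, z j ∈ ball (0 : ℂ) 1) (hB : Summable fun j => 1 - ‖z j‖)
    {u : ℂ} (hu : u ∈ ball (0 : ℂ) 1) :
    HasProd (fun j => blaschkeFactor (z j) u) (blaschkeProduct z u) :=
  (hasProdLocallyUniformlyOn_blaschkeProduct hz hB).hasProd hu

lemma differentiableOn_blaschkeProduct (hz : ∀ j, z j ∈ ball (0 : ℂ) 1)
    (hB : Summable fun j => 1 - ‖z j‖) : DifferentiableOn ℂ (blaschkeProduct z) (ball 0 1) :=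
  (hasProdLocallyUniformlyOn_blaschkeProduct hz hB).differentiableOn
    (Eventually.of_forall fun s _ hu => (Finset.analyticAt_fun_prod s fun j _ =>
      analyticAt_blaschkeFactor (mem_ball_zero_iff.mp (hz j)).le
        (mem_ball_zero_iff.mp hu)).differentiableAt.differentiableWithinAt)
    isOpen_ball

lemma norm_blaschkeProduct_le_one (hz : ∀ j, z j ∈ ball (0 : ℂ) 1)
    (hB : Summable fun j => 1 - ‖z j‖) {u : ℂ} (hu : u ∈ ball (0 : ℂ) 1) :
    ‖blaschkeProduct z u‖ ≤ 1 :=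
  le_of_tendsto' (hasProd_blaschkeProduct hz hB hu).norm fun _ =>
    Finset.prod_le_one (fun _ _ => norm_nonneg _) fun j _ =>
      norm_blaschkeFactor_le_one (mem_ball_zero_iff.mp (hz j)).le (mem_ball_zero_iff.mp hu)

lemma blaschkeProduct_ne_zero (hz : ∀ j, z j ∈ ball (0 : ℂ) 1)
    (hB : Summable fun j => 1 - ‖z j‖) {w : ℂ} (hw : w ∈ ball (0 : ℂ) 1) (hzw : ∀ j, z j ≠ w) :
    blaschkeProduct z w ≠ 0 := by
  have hza : ∀ j, ‖z j‖ ≤ 1 := fun j => (mem_ball_zero_iff.mp (hz j)).le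
  have hw' := mem_ball_zero_iff.mp hw
  have hsum : Summable fun j => ‖blaschkeFactor (z j) w - 1‖ :=
    (hB.mul_left ((1 + ‖w‖) / (1 - ‖w‖))).of_nonneg_of_le (fun _ => norm_nonneg _) fun j => by
      rw [norm_sub_rev]
      exact norm_one_sub_blaschkeFactor_le (hza j) le_rfl hw'
  have h := tprod_one_add_ne_zero_of_summable (f := fun j => blaschkeFactor (z j) w - 1)
    (fun j => by
      rw [add_sub_cancel]
      exact blaschkeFactor_ne_zero (hza j) hw' (hzw j).symm) hsum
  simp only [add_sub_cancel] at h
  exact h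

lemma blaschkeProduct_eq_prod_range_mul (hz : ∀ j, z j ∈ ball (0 : ℂ) 1)
    (hB : Summable fun j => 1 - ‖z j‖) (N : ℕ) {u : ℂ} (hu : u ∈ ball (0 : ℂ) 1) :
    blaschkeProduct z u =
      (∏ j ∈ Finset.range N, blaschkeFactor (z j) u) * blaschkeProduct (fun j => z (j + N)) u := by
  have hB' : Summable fun j => 1 - ‖z (j + N)‖ := (summable_nat_add_iff N).mpr hB
  exact (hasProd_blaschkeProduct hz hB hu).unique
    (HasProd.prod_range_mul (f := fun j => blaschkeFactor (z j) u)
      (hasProd_blaschkeProduct (fun j => hz (j + N)) hB' hu))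

lemma analyticOrderAt_blaschkeProduct (hz : ∀ j, z j ∈ ball (0 : ℂ) 1)
    (hB : Summable fun j => 1 - ‖z j‖) {w : ℂ} (hw : w ∈ ball (0 : ℂ) 1) :
    analyticOrderAt (blaschkeProduct z) w = {j | z j = w}.ncard := by
  have hza : ∀ j, ‖z j‖ ≤ 1 := fun j => (mem_ball_zero_iff.mp (hz j)).le
  have hw' := mem_ball_zero_iff.mp hw
  obtain ⟨N, hN⟩ := eventually_atTop.mp (eventually_ne_of_summable_one_sub_norm hB hw')
  have hB' : Summable fun j => 1 - ‖z (j + N)‖ := (summable_nat_add_iff N).mpr hB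
  set tail := blaschkeProduct fun j => z (j + N)
  have htail : AnalyticAt ℂ tail w :=
    (differentiableOn_blaschkeProduct (fun j => hz (j + N)) hB').analyticAt
      (isOpen_ball.mem_nhds hw)
  have htail_ne : tail w ≠ 0 :=
    blaschkeProduct_ne_zero (fun j => hz (j + N)) hB' hw fun j => hN _ (Nat.le_add_left N j)
  have hfactors : ∀ j ∈ Finset.range N, AnalyticAt ℂ (blaschkeFactor (z j)) w :=
    fun j _ => analyticAt_blaschkeFactor (hza j) hw'
  have hsplit : blaschkeProduct z =ᶠ[𝓝 w] (∏ j ∈ Finset.range N, blaschkeFactor (z j)) * tail :=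
    eventually_of_mem (isOpen_ball.mem_nhds hw) fun u hu => by
      simp [blaschkeProduct_eq_prod_range_mul hz hB N hu, tail]
  have hzeros : {j | z j = w} = ↑((Finset.range N).filter (z · = w)) :=
    Set.ext fun j => ⟨fun hj => Finset.mem_filter.mpr
      ⟨Finset.mem_range.mpr (not_le.mp fun hNj => hN j hNj hj), hj⟩,
      fun hj => (Finset.mem_filter.mp hj).2⟩
  rw [analyticOrderAt_congr hsplit, analyticOrderAt_mul (Finset.analyticAt_prod _ hfactors) htail,
    analyticOrderAt_finset_prod hfactors, htail.analyticOrderAt_eq_zero.mpr htail_ne, add_zero,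
    Finset.sum_congr rfl fun j _ => analyticOrderAt_blaschkeFactor (hza j) hw', Finset.sum_boole,
    hzeros, Set.ncard_coe_finset]

end BlaschkeProduct

theorem stmt_0 (z : ℕ → ℂ) (hz : ∀ j, z j ∈ ball (0:ℂ) 1)
    (hB : Summable fun j => 1 - ‖z j‖) :
    ∃ f : ℂ → ℂ, DifferentiableOn ℂ f (ball 0 1) ∧
      MapsTo f (ball 0 1) (closedBall 0 1) ∧
      (∃ z₁ ∈ ball (0:ℂ) 1, ∃ z₂ ∈ ball (0:ℂ) 1, f z₁ ≠ f z₂) ∧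
      ∀ w ∈ ball (0:ℂ) 1, ∃ g : ℂ → ℂ, AnalyticAt ℂ g w ∧ g w ≠ 0 ∧
        ∀ᶠ u in nhds w, f u = (u - w) ^ ({j | z j = w}.ncard) * g u := by
  have hdiff := differentiableOn_blaschkeProduct hz hB
  refine ⟨blaschkeProduct z, hdiff,
    fun u hu => mem_closedBall_zero_iff.mpr (norm_blaschkeProduct_le_one hz hB hu), ?_,
    fun w hw => ?_⟩
  · obtain ⟨u, hu, hu_notMem⟩ := ((countable_range z).dense_compl ℂ).inter_open_nonempty _
      isOpen_ball ⟨0, mem_ball_self one_pos⟩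
    refine ⟨u, hu, z 0, hz 0, ?_⟩
    rw [blaschkeProduct_eq_prod_range_mul hz hB 1 (hz 0), Finset.prod_range_one,
      blaschkeFactor_self, zero_mul]
    exact blaschkeProduct_ne_zero hz hB hu fun j hj => hu_notMem ⟨j, hj⟩
  · simpa using (hdiff.analyticAt (isOpen_ball.mem_nhds hw)).analyticOrderAt_eq_natCast.mp
      (analyticOrderAt_blaschkeProduct hz hB hw)
end

section
/- Let $f : \mathbb{D} \to \mathbb{D}$ be analytic and suppose $f$ extends holomorphically across an open arc $I$ of $\partial\mathbb{D}$ with $f(I) \subset \partial\mathbb{D}$. Then for every $\zeta \in I$, $\lim_{z\to\zeta,\, z\in\mathbb{D}} (1-|z|^2)\frac{|f'(z)|}{1-|f(z)|^2} = 1$. -/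
/-!
Near `ζ` the Schwarz reflection principle holds in the form `F z * conj (F z⋆) = 1`, where
`z⋆ = (conj z)⁻¹`: the left side is holomorphic and equals `‖F z‖ ^ 2 = 1` on the arc `I`, so
the identity theorem applies. For `a * conj b = 1` one has `‖a‖ * ‖b - a‖ = |1 - ‖a‖ ^ 2|`;
applied to `(z, z⋆)` and to `(F z, F z⋆)` this rewrites the quantity as
`‖z‖ * ‖F' z‖ / (‖F z‖ * ‖(F z⋆ - F z) / (z⋆ - z)‖)`, and strict differentiability sends the
difference quotient to `F' ζ`. So the limit is `1` once `F' ζ ≠ 0`. If instead `F' ζ = 0`, then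
`F = F ζ + (z - ζ) ^ n * g` with `n ≥ 2` and `g ζ ≠ 0`; since `n ≥ 2`, some direction `d`
pointing into the disk has `Re (conj (F ζ) * d ^ n * g ζ) > 0`, and along `ζ + t * d` this gives
`‖F‖ ≥ 1` inside the disk, contradicting `f(𝔻) ⊆ 𝔻`.
-/

open Metric Set Filter Topology ComplexConjugate

theorem HasStrictDerivAt.tendsto_div_sub_of_ne {𝕜 : Type*} [NontriviallyNormedField 𝕜]
    {f : 𝕜 → 𝕜} {f' x : 𝕜} (hf : HasStrictDerivAt f f' x) :
    Tendsto (fun p : 𝕜 × 𝕜 => (f p.1 - f p.2) / (p.1 - p.2))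
      (𝓝 (x, x) ⊓ 𝓟 {p | p.1 ≠ p.2}) (𝓝 f') := by
  rw [tendsto_iff_norm_sub_tendsto_zero]
  refine ((hasDerivAtFilter_iff_tendsto.mp hf).mono_left inf_le_left).congr'
    (eventually_inf_principal.mpr (Eventually.of_forall fun p (hp : p.1 ≠ p.2) => ?_))
  dsimp only
  rw [smul_eq_mul, ← norm_inv, ← norm_mul]
  congr 1
  field_simp [sub_ne_zero.mpr hp]

theorem AnalyticAt.exists_eventuallyEq_add_pow_smul_of_deriv_eq_zero {𝕜 E : Type*}
    [NontriviallyNormedField 𝕜] [CharZero 𝕜] [NormedAddCommGroup E] [NormedSpace 𝕜 E]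
    [CompleteSpace E] {f : 𝕜 → E} {x : 𝕜} (hf : AnalyticAt 𝕜 f x) (hd : deriv f x = 0)
    (hne : ¬ ∀ᶠ z in 𝓝 x, f z = f x) :
    ∃ n, 2 ≤ n ∧ ∃ g : 𝕜 → E, AnalyticAt 𝕜 g x ∧ g x ≠ 0 ∧
      ∀ᶠ z in 𝓝 x, f z = f x + (z - x) ^ n • g z := by
  have htop : analyticOrderAt (f · - f x) x ≠ ⊤ := fun h =>
    hne ((analyticOrderAt_eq_top.mp h).mono fun z hz => sub_eq_zero.mp hz)
  obtain ⟨n, hn⟩ := ENat.ne_top_iff_exists.mp htop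
  have h1 : 1 ≤ analyticOrderAt (deriv f) x :=
    Order.one_le_iff_ne_zero.mpr (hf.deriv.analyticOrderAt_ne_zero.mpr hd)
  have h2 : (2 : ℕ∞) ≤ n := by
    rw [hn, ← hf.analyticOrderAt_deriv_add_one]
    exact add_le_add_left h1 1
  obtain ⟨g, hg, hgx, hfg⟩ := (hf.fun_sub analyticAt_const).analyticOrderAt_eq_natCast.mp hn.symm
  exact ⟨n, by exact_mod_cast h2, g, hg, hgx, hfg.mono fun z hz => (sub_eq_iff_eq_add'.mp hz)⟩

namespace Complex

lemma norm_add_sq_eq (w x : ℂ) : ‖w + x‖ ^ 2 = ‖w‖ ^ 2 + ‖x‖ ^ 2 + 2 * (conj w * x).re := by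
  rw [← normSq_eq_norm_sq, normSq_add, normSq_eq_norm_sq, normSq_eq_norm_sq,
    ← conj_re (w * conj x), map_mul, conj_conj, mul_comm (conj w)]

lemma norm_mul_norm_sub_eq_abs_one_sub_sq {a b : ℂ} (h : a * conj b = 1) :
    ‖a‖ * ‖b - a‖ = |1 - ‖a‖ ^ 2| := by
  have key : a * conj (b - a) = ((1 - ‖a‖ ^ 2 : ℝ) : ℂ) := by
    rw [map_sub, mul_sub, h, mul_conj, normSq_eq_norm_sq]; push_cast; ring
  rw [← norm_conj (b - a), ← norm_mul, key, norm_real, Real.norm_eq_abs]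

lemma mul_conj_inv_conj {z : ℂ} (hz : z ≠ 0) : z * conj (conj z)⁻¹ = 1 := by
  rw [map_inv₀, conj_conj, mul_inv_cancel₀ hz]

lemma inv_conj_of_norm_eq_one {ζ : ℂ} (hζ : ‖ζ‖ = 1) : (conj ζ)⁻¹ = ζ := by
  rw [inv_eq_conj (by rwa [norm_conj]), conj_conj]

lemma inv_conj_ne_self_of_norm_lt_one {z : ℂ} (hz0 : z ≠ 0) (hz : ‖z‖ < 1) :
    (conj z)⁻¹ ≠ z := by
  intro h
  have h1 : 1 < ‖z‖⁻¹ := (one_lt_inv₀ (norm_pos_iff.mpr hz0)).mpr hz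
  rw [← norm_conj z, ← norm_inv, h] at h1
  linarith

lemma tendsto_inv_conj_nhds_of_norm_eq_one {ζ : ℂ} (hζ : ‖ζ‖ = 1) :
    Tendsto (fun z => (conj z)⁻¹) (𝓝 ζ) (𝓝 ζ) := by
  have hζ0 : conj ζ ≠ 0 := by rw [ne_eq, map_eq_zero]; rintro rfl; simp at hζ
  simpa [inv_conj_of_norm_eq_one hζ] using (continuous_conj.tendsto ζ).inv₀ hζ0

lemma tendsto_div_sub_inv_conj {F : ℂ → ℂ} {F' ζ : ℂ} (hF : HasStrictDerivAt F F' ζ)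
    (hζ : ‖ζ‖ = 1) :
    Tendsto (fun z => (F (conj z)⁻¹ - F z) / ((conj z)⁻¹ - z)) (𝓝[ball 0 1] ζ) (𝓝 F') := by
  have hpair : Tendsto (fun z => ((conj z)⁻¹, z)) (𝓝[ball 0 1] ζ)
      (𝓝 (ζ, ζ) ⊓ 𝓟 {p | p.1 ≠ p.2}) := by
    refine tendsto_inf.mpr ⟨?_, tendsto_principal.mpr ?_⟩
    · exact ((tendsto_inv_conj_nhds_of_norm_eq_one hζ).prodMk_nhds tendsto_id).mono_left
        nhdsWithin_le_nhds
    have hζ0 : ζ ≠ 0 := by rintro rfl; simp at hζ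
    filter_upwards [self_mem_nhdsWithin, (eventually_ne_nhds hζ0).filter_mono nhdsWithin_le_nhds]
      with z hz hz0
    exact inv_conj_ne_self_of_norm_lt_one hz0 (mem_ball_zero_iff.mp hz)
  exact (hF.tendsto_div_sub_of_ne.comp hpair :)

lemma _root_.DifferentiableAt.conj_comp_inv_conj {F : ℂ → ℂ} {z : ℂ}
    (hF : DifferentiableAt ℂ F (conj z)⁻¹) (hz : z ≠ 0) :
    DifferentiableAt ℂ (fun w => conj (F (conj w)⁻¹)) z := by
  have h := hF.conj_conj
  rw [map_inv₀, conj_conj] at h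
  simpa [Function.comp_def] using h.comp z (differentiableAt_inv hz)

theorem eqOn_mul_conj_comp_inv_conj {F : ℂ → ℂ} {W : Set ℂ} (hW : IsOpen W)
    (hWc : IsPreconnected W)
    (hF : ∀ z ∈ W, z ≠ 0 ∧ DifferentiableAt ℂ F z ∧ DifferentiableAt ℂ F (conj z)⁻¹)
    {ζ : ℂ} (hζ : ζ ∈ W) (hfreq : ∃ᶠ z in 𝓝[≠] ζ, ‖z‖ = 1 ∧ ‖F z‖ = 1) :
    EqOn (fun z => F z * conj (F (conj z)⁻¹)) 1 W := by
  have han : AnalyticOnNhd ℂ (fun z => F z * conj (F (conj z)⁻¹)) W :=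
    DifferentiableOn.analyticOnNhd (fun z hz => ((hF z hz).2.1.mul
      ((hF z hz).2.2.conj_comp_inv_conj (hF z hz).1)).differentiableWithinAt) hW
  refine han.eqOn_of_preconnected_of_frequently_eq analyticOnNhd_const hWc hζ
    (hfreq.mono fun z ⟨hz, hFz⟩ => ?_)
  rw [inv_conj_of_norm_eq_one hz, mul_conj, normSq_eq_norm_sq, hFz]
  simp

lemma frequently_nhdsNE_mem_inter_sphere {V : Set ℂ} (hV : IsOpen V) {ζ : ℂ}
    (hζ : ζ ∈ V ∩ sphere 0 1) : ∃ᶠ z in 𝓝[≠] ζ, z ∈ V ∩ sphere 0 1 := by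
  have hacc : AccPt ζ (𝓟 (sphere (0 : ℂ) 1)) :=
    (isPreconnected_sphere (by simp [rank_real_complex]) 0 1).preperfect_of_nontrivial
      ⟨1, by simp, -1, by simp, by norm_num⟩ ζ hζ.2
  exact ((accPt_iff_frequently_nhdsNE.mp hacc).and_eventually
    (mem_nhdsWithin_of_mem_nhds (hV.mem_nhds hζ.1))).mono fun z hz => ⟨hz.2, hz.1⟩

lemma one_le_norm_add_of_re_nonneg {w x : ℂ} (hw : ‖w‖ = 1) (hx : 0 ≤ (conj w * x).re) :
    1 ≤ ‖w + x‖ := by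
  have h := norm_add_sq_eq w x
  rw [hw] at h
  nlinarith [norm_nonneg (w + x), sq_nonneg ‖x‖]

lemma tendsto_add_real_mul_nhdsWithin_ball {ζ d : ℂ} (hζ : ‖ζ‖ = 1)
    (hd : (conj ζ * d).re < 0) :
    Tendsto (fun t : ℝ => ζ + t * d) (𝓝[>] 0) (𝓝[ball 0 1] ζ) := by
  have hcont : Continuous (fun t : ℝ => ζ + t * d) := by fun_prop
  refine tendsto_nhdsWithin_iff.mpr ⟨?_, ?_⟩
  · simpa using (hcont.tendsto 0).mono_left nhdsWithin_le_nhds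
  have hlim : Tendsto (fun t : ℝ => 2 * (conj ζ * d).re + t * ‖d‖ ^ 2) (𝓝 0)
      (𝓝 (2 * (conj ζ * d).re)) := by
    simpa using ((continuous_id.mul continuous_const).const_add _).tendsto (0 : ℝ)
  filter_upwards [self_mem_nhdsWithin,
    (hlim.eventually (gt_mem_nhds (by linarith))).filter_mono nhdsWithin_le_nhds]
    with t (ht : 0 < t) hneg
  have hsq : ‖ζ + t * d‖ ^ 2 = 1 + t * (2 * (conj ζ * d).re + t * ‖d‖ ^ 2) := by
    rw [norm_add_sq_eq, hζ, norm_mul, norm_real, Real.norm_of_nonneg ht.le, mul_left_comm,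
      re_ofReal_mul]
    ring
  rw [mem_ball_zero_iff, ← sq_lt_one_iff₀ (norm_nonneg _), hsq]
  nlinarith

lemma exists_inward_direction {ζ c : ℂ} (hζ : ‖ζ‖ = 1) (hc : c ≠ 0) {n : ℕ} (hn : 2 ≤ n) :
    ∃ d : ℂ, (conj ζ * d).re < 0 ∧ 0 < (c * d ^ n).re := by
  set a := c * (-ζ) ^ n
  -- `d = -ζ * exp (θ * I)`: both `θ` and `arg a + n * θ = arg a / 4` lie in `(-π/2, π/2)`.
  set θ : ℝ := -(3 * arg a / (4 * n)) with hθ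
  have hn2 : (2 : ℝ) ≤ n := by exact_mod_cast hn
  have harg : |arg a| ≤ Real.pi := abs_le.mpr ⟨(neg_pi_lt_arg a).le, arg_le_pi a⟩
  have hπ := Real.pi_pos
  refine ⟨-ζ * exp (θ * I), ?_, ?_⟩
  · have h : conj ζ * (-ζ * exp (θ * I)) = -exp (θ * I) := by
      rw [← mul_assoc, mul_neg, mul_comm (conj ζ), mul_conj, normSq_eq_norm_sq, hζ]; simp
    rw [h, neg_re, exp_ofReal_mul_I_re, neg_lt_zero]
    have hθ_le : |θ| ≤ 3 * Real.pi / 8 := by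
      rw [abs_neg, abs_div, abs_mul, abs_of_pos (by positivity : (0 : ℝ) < 4 * n),
        div_le_iff₀ (by positivity)]
      nlinarith
    exact Real.cos_pos_of_mem_Ioo ⟨by linarith [neg_abs_le θ], by linarith [le_abs_self θ]⟩
  · have ha : a ≠ 0 :=
      mul_ne_zero hc (pow_ne_zero _ (neg_ne_zero.mpr (by rintro rfl; simp at hζ)))
    have hn0 : (n : ℂ) ≠ 0 := by exact_mod_cast (by omega : n ≠ 0)
    have h : c * (-ζ * exp (θ * I)) ^ n = ‖a‖ * exp ((arg a / 4 : ℝ) * I) :=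
      calc c * (-ζ * exp (θ * I)) ^ n = ‖a‖ * exp (arg a * I) * exp (n * (θ * I)) := by
            rw [norm_mul_exp_arg_mul_I, exp_nat_mul]; ring
        _ = ‖a‖ * exp ((arg a / 4 : ℝ) * I) := by
          rw [mul_assoc, ← exp_add, hθ]; congr 2; push_cast; field_simp; ring
    rw [h, re_ofReal_mul, exp_ofReal_mul_I_re]
    refine mul_pos (norm_pos_iff.mpr ha) (Real.cos_pos_of_mem_Ioo ⟨?_, ?_⟩) <;>
      linarith [abs_le.mp harg]

theorem deriv_ne_zero_of_norm_lt_one {F : ℂ → ℂ} {ζ : ℂ} (hF : AnalyticAt ℂ F ζ)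
    (hζ : ‖ζ‖ = 1) (hFζ : ‖F ζ‖ = 1) (hlt : ∀ᶠ z in 𝓝[ball 0 1] ζ, ‖F z‖ < 1) :
    deriv F ζ ≠ 0 := by
  intro hd
  have hnot : ¬ ∀ᶠ z in 𝓝 ζ, F z = F ζ := by
    have : (𝓝[ball (0 : ℂ) 1] ζ).NeBot := mem_closure_iff_nhdsWithin_neBot.mp
      (by rw [closure_ball 0 one_ne_zero]; simpa using hζ.le)
    intro h
    obtain ⟨z, hz, hlt⟩ := ((h.filter_mono nhdsWithin_le_nhds).and hlt).exists
    rw [hz, hFζ] at hlt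
    exact lt_irrefl _ hlt
  obtain ⟨n, hn2, g, hg, hgζ, hFg⟩ := hF.exists_eventuallyEq_add_pow_smul_of_deriv_eq_zero hd hnot
  have hc : conj (F ζ) * g ζ ≠ 0 :=
    mul_ne_zero (by rw [ne_eq, map_eq_zero]; rintro h; simp [h] at hFζ) hgζ
  obtain ⟨d, hdin, hdout⟩ := exists_inward_direction hζ hc hn2
  rw [mul_right_comm] at hdout
  have hpath := tendsto_add_real_mul_nhdsWithin_ball hζ hdin
  have hgpath : Tendsto (fun t : ℝ => (conj (F ζ) * d ^ n * g (ζ + t * d)).re) (𝓝[>] 0)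
      (𝓝 (conj (F ζ) * d ^ n * g ζ).re) :=
    (continuous_re.tendsto _).comp
      ((hg.continuousAt.tendsto.comp (hpath.mono_right nhdsWithin_le_nhds)).const_mul _)
  obtain ⟨t, ht, hFt, hFgt, hre⟩ :=
    ((eventually_mem_nhdsWithin (s := Ioi (0 : ℝ)) (a := 0)).and
      ((hpath.eventually hlt).and (((hpath.mono_right nhdsWithin_le_nhds).eventually hFg).and
        (hgpath.eventually (lt_mem_nhds hdout))))).exists
  rw [hFgt, add_sub_cancel_left, smul_eq_mul] at hFt
  refine (one_le_norm_add_of_re_nonneg hFζ ?_).not_gt hFt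
  rw [mul_pow, ← ofReal_pow, mul_assoc, mul_left_comm, re_ofReal_mul, ← mul_assoc]
  exact mul_nonneg (pow_nonneg (le_of_lt ht) n) hre.le

theorem tendsto_one_sub_norm_sq_mul_norm_deriv_div_of_reflection {F : ℂ → ℂ} {ζ : ℂ}
    (hζ : ‖ζ‖ = 1) (hF : AnalyticAt ℂ F ζ) (hd : deriv F ζ ≠ 0) (hFζ : ‖F ζ‖ = 1)
    (hrefl : ∀ᶠ z in 𝓝 ζ, F z * conj (F (conj z)⁻¹) = 1)
    (hlt : ∀ z ∈ ball (0 : ℂ) 1, ‖F z‖ < 1) :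
    Tendsto (fun z => (1 - ‖z‖ ^ 2) * (‖deriv F z‖ / (1 - ‖F z‖ ^ 2)))
      (𝓝[ball 0 1] ζ) (𝓝 1) := by
  have hlim : Tendsto (fun z => ‖z‖ * ‖deriv F z‖ /
        (‖F z‖ * ‖(F (conj z)⁻¹ - F z) / ((conj z)⁻¹ - z)‖))
      (𝓝[ball 0 1] ζ) (𝓝 (‖ζ‖ * ‖deriv F ζ‖ / (‖F ζ‖ * ‖deriv F ζ‖))) := by
    have hz : ContinuousWithinAt (‖·‖) (ball (0 : ℂ) 1) ζ := continuous_norm.continuousWithinAt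
    have hF' : ContinuousWithinAt (‖deriv F ·‖) (ball 0 1) ζ :=
      hF.deriv.continuousAt.norm.continuousWithinAt
    have hF0 : ContinuousWithinAt (‖F ·‖) (ball 0 1) ζ :=
      hF.continuousAt.norm.continuousWithinAt
    exact (hz.tendsto.mul hF'.tendsto).div
      (hF0.tendsto.mul (tendsto_div_sub_inv_conj hF.hasStrictDerivAt hζ).norm)
      (by simp [hFζ, hd])
  rw [hζ, hFζ, one_mul, div_self (norm_ne_zero_iff.mpr hd)] at hlim
  refine hlim.congr' ?_
  have hζ0 : ζ ≠ 0 := by rintro rfl; simp at hζ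
  filter_upwards [self_mem_nhdsWithin, (eventually_ne_nhds hζ0).filter_mono nhdsWithin_le_nhds,
    hrefl.filter_mono nhdsWithin_le_nhds] with z hz hz0 hrz
  have hz1 := mem_ball_zero_iff.mp hz
  have hFz1 := hlt z hz
  have hzz := norm_mul_norm_sub_eq_abs_one_sub_sq (mul_conj_inv_conj hz0)
  have hFF := norm_mul_norm_sub_eq_abs_one_sub_sq hrz
  rw [abs_of_pos (by nlinarith [norm_nonneg z])] at hzz
  rw [abs_of_pos (by nlinarith [norm_nonneg (F z)])] at hFF
  have hzpos : 0 < ‖z‖ * ‖(conj z)⁻¹ - z‖ := by rw [hzz]; nlinarith [norm_nonneg z]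
  have hFpos : 0 < ‖F z‖ * ‖F (conj z)⁻¹ - F z‖ := by rw [hFF]; nlinarith [norm_nonneg (F z)]
  have : ‖(conj z)⁻¹ - z‖ ≠ 0 := right_ne_zero_of_mul hzpos.ne'
  rw [← hzz, ← hFF, norm_div]
  field_simp

end Complex

theorem stmt_7_general (f F : ℂ → ℂ) (I U : Set ℂ)
    (hIopen : ∃ V : Set ℂ, IsOpen V ∧ I = V ∩ sphere (0:ℂ) 1)
    (hU : IsOpen U) (hsub : ball (0:ℂ) 1 ∪ I ⊆ U)
    (hF : DifferentiableOn ℂ F U) (hfF : EqOn F f (ball 0 1))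
    (hmod : ∀ ζ ∈ I, ‖F ζ‖ = 1)
    (hmap : MapsTo f (ball 0 1) (ball 0 1)) :
    ∀ ζ ∈ I,
      Tendsto (fun z => (1 - ‖z‖ ^ 2) *
          (‖deriv f z‖ / (1 - ‖f z‖ ^ 2)))
        (nhdsWithin ζ (ball (0:ℂ) 1)) (nhds 1) := by
  obtain ⟨V, hV, rfl⟩ := hIopen
  intro ζ hζ
  have hζ1 : ‖ζ‖ = 1 := mem_sphere_zero_iff_norm.mp hζ.2
  have hζ0 : ζ ≠ 0 := by rintro rfl; simp at hζ1
  have hζU : ∀ᶠ z in 𝓝 ζ, z ∈ U := hU.mem_nhds (hsub (Or.inr hζ))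
  have hFlt : ∀ z ∈ ball (0 : ℂ) 1, ‖F z‖ < 1 := fun z hz => by
    rw [hfF hz]; exact mem_ball_zero_iff.mp (hmap hz)
  obtain ⟨r, hr, hball⟩ := Metric.eventually_nhds_iff_ball.mp
    ((eventually_ne_nhds hζ0).and
      (hζU.and ((Complex.tendsto_inv_conj_nhds_of_norm_eq_one hζ1).eventually hζU)))
  have hrefl := Complex.eqOn_mul_conj_comp_inv_conj isOpen_ball
    (convex_ball ζ r).isPreconnected
    (fun z hz => ⟨(hball z hz).1, hF.differentiableAt (hU.mem_nhds (hball z hz).2.1),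
      hF.differentiableAt (hU.mem_nhds (hball z hz).2.2)⟩) (mem_ball_self hr)
    ((Complex.frequently_nhdsNE_mem_inter_sphere hV hζ).mono fun z hz =>
      ⟨mem_sphere_zero_iff_norm.mp hz.2, hmod z hz⟩)
  have hFan : AnalyticAt ℂ F ζ := hF.analyticAt hζU
  have hd := Complex.deriv_ne_zero_of_norm_lt_one hFan hζ1 (hmod ζ hζ)
    (eventually_mem_nhdsWithin.mono hFlt)
  refine (Complex.tendsto_one_sub_norm_sq_mul_norm_deriv_div_of_reflection hζ1 hFan hd
    (hmod ζ hζ) (eventually_of_mem (ball_mem_nhds ζ hr) hrefl) hFlt).congr' ?_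
  filter_upwards [self_mem_nhdsWithin] with z hz
  rw [hfF hz, (hfF.eventuallyEq_of_mem (isOpen_ball.mem_nhds hz)).deriv_eq]

theorem stmt_7 (f F : ℂ → ℂ) (I U : Set ℂ)
    (hI : I ⊆ sphere (0:ℂ) 1)
    (hIopen : ∃ V : Set ℂ, IsOpen V ∧ I = V ∩ sphere (0:ℂ) 1)
    (hU : IsOpen U) (hsub : ball (0:ℂ) 1 ∪ I ⊆ U)
    (hF : DifferentiableOn ℂ F U) (hfF : EqOn F f (ball 0 1))
    (hmod : ∀ ζ ∈ I, ‖F ζ‖ = 1)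
    (hmap : MapsTo f (ball 0 1) (ball 0 1)) :
    ∀ ζ ∈ I,
      Tendsto (fun z => (1 - ‖z‖ ^ 2) *
          (‖deriv f z‖ / (1 - ‖f z‖ ^ 2)))
        (nhdsWithin ζ (ball (0:ℂ) 1)) (nhds 1) :=
  stmt_7_general f F I U hIopen hU hsub hF hfF hmod hmap
end
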